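/- Let (S(t))_{t∈ℝ₊} be a bounded C₀-semigroup on a complex Banach space X and let B ⊂ ℝ be a bounded set. For each r ∈ B consider the representation 𝒮_r = {e^{2πirt} S(t) : t ∈ ℝ₊} of the semigroup (ℝ₊,+) on X. Then {((1/s) ∫_0^s e^{2πirt} S(t) dt)_{s∈ℝ₊} : r ∈ B}, where the operators act by x ↦ (1/s)∫_0^s e^{2πirt} S(t)x dt and s → ∞, is a uniform family of ergodic nets. -/

import Mathlib

open Filter Topology

noncomputable section

/-- A uniform family `{(A_α^{𝒮_i})_{α ∈ ι} : i ∈ I}` of **right** ergodic nets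
(Definition 2.1), with the operators recorded as maps `X → X`:
(1) each `A_α^{𝒮_i}` can be approximated, uniformly in `i` and on finitely many vectors,
by convex combinations `∑_j c_{i,j} S_{i,g_j}` with the *same* `g_1, …, g_N` for all `i`;
(2) `limsup_α sup_i ‖A_α^{𝒮_i} x - A_α^{𝒮_i} S_{i,g} x‖ = 0`. -/
def UniformFamilyRightErgodic {I G ι X : Type} [Preorder ι]
    [NormedAddCommGroup X] [NormedSpace ℂ X]
    (S : I → G → X → X) (A : I → ι → X → X) : Prop :=
  (∀ (α : ι) (ε : ℝ), 0 < ε → ∀ (m : ℕ) (xs : Fin m → X),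
      ∃ (N : ℕ) (g : Fin N → G) (c : I → Fin N → ℝ),
        (∀ i j, 0 ≤ c i j) ∧ (∀ i, ∑ j, c i j = 1) ∧
        ∀ (i : I) (k : Fin m),
          ‖A i α (xs k) - ∑ j, c i j • S i (g j) (xs k)‖ < ε) ∧
  (∀ (g : G) (x : X),
      Tendsto (fun α : ι => ⨆ i : I, ‖A i α x - A i α (S i g x)‖) atTop (nhds 0))

/-- A uniform family of ergodic nets: a uniform family of right ergodic nets which in
addition satisfies `limsup_α sup_i ‖A_α^{𝒮_i} x - S_{i,g} A_α^{𝒮_i} x‖ = 0`. -/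
def UniformFamilyErgodic {I G ι X : Type} [Preorder ι]
    [NormedAddCommGroup X] [NormedSpace ℂ X]
    (S : I → G → X → X) (A : I → ι → X → X) : Prop :=
  UniformFamilyRightErgodic S A ∧
  ∀ (g : G) (x : X),
    Tendsto (fun α : ι => ⨆ i : I, ‖A i α x - S i g (A i α x)‖) atTop (nhds 0)

open MeasureTheory

namespace C0Aux

variable {X : Type} [NormedAddCommGroup X] [NormedSpace ℂ X] [CompleteSpace X]

/-- The integrand `t ↦ e^{2πirt} S(t)x`. -/
def fnAux (Sem : ℝ → (X →L[ℂ] X)) (r : ℝ) (x : X) (t : ℝ) : X :=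
  Complex.exp (((2 * Real.pi * r * t : ℝ) : ℂ) * Complex.I) • Sem t x

lemma fnAux_def (Sem : ℝ → (X →L[ℂ] X)) (r : ℝ) (x : X) (t : ℝ) :
    Complex.exp (((2 * Real.pi * r * t : ℝ) : ℂ) * Complex.I) • Sem t x = fnAux Sem r x t :=
  rfl

lemma norm_exp_real_mul_I (a : ℝ) : ‖Complex.exp ((a : ℂ) * Complex.I)‖ = 1 := by
  rw [Complex.norm_exp]
  simp

lemma fnAux_norm (Sem : ℝ → (X →L[ℂ] X)) (r : ℝ) (x : X) (t : ℝ) :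
    ‖fnAux Sem r x t‖ = ‖Sem t x‖ := by
  rw [fnAux, norm_smul, norm_exp_real_mul_I, one_mul]

lemma fnAux_contOn (Sem : ℝ → (X →L[ℂ] X))
    (hcont : ∀ x : X, ContinuousOn (fun t : ℝ => Sem t x) (Set.Ici (0 : ℝ)))
    (r : ℝ) (x : X) : ContinuousOn (fnAux Sem r x) (Set.Ici (0 : ℝ)) := by
  apply ContinuousOn.smul _ (hcont x)
  apply Continuous.continuousOn
  fun_prop

lemma fnAux_integrable (Sem : ℝ → (X →L[ℂ] X))
    (hcont : ∀ x : X, ContinuousOn (fun t : ℝ => Sem t x) (Set.Ici (0 : ℝ)))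
    (r : ℝ) (x : X) {a b : ℝ} (ha : 0 ≤ a) (hb : 0 ≤ b) :
    IntervalIntegrable (fnAux Sem r x) volume a b := by
  apply ContinuousOn.intervalIntegrable
  apply (fnAux_contOn Sem hcont r x).mono
  intro t ht
  exact le_trans (le_min ha hb) ht.1

lemma fnAux_shift (Sem : ℝ → (X →L[ℂ] X))
    (hsem : ∀ t u : ℝ, 0 ≤ t → 0 ≤ u → (Sem t).comp (Sem u) = Sem (t + u))
    (r : ℝ) (x : X) {g t : ℝ} (hg : 0 ≤ g) (ht : 0 ≤ t) :
    fnAux Sem r (fnAux Sem r x g) t = fnAux Sem r x (t + g) := by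
  simp only [fnAux]
  rw [_root_.map_smul, smul_smul, ← Complex.exp_add]
  have h1 : Sem t (Sem g x) = Sem (t + g) x := by
    rw [show Sem t (Sem g x) = ((Sem t).comp (Sem g)) x from rfl, hsem t g ht hg]
  rw [h1]
  congr 1
  push_cast
  ring

lemma fnAux_real_smul (Sem : ℝ → (X →L[ℂ] X)) (r : ℝ) (c : ℝ) (y : X) (g : ℝ) :
    fnAux Sem r (c • y) g = c • fnAux Sem r y g := by
  simp only [fnAux]
  rw [(Sem g).map_smul_of_tower, smul_comm]

lemma fnAux_integral_shift (Sem : ℝ → (X →L[ℂ] X))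
    (hsem : ∀ t u : ℝ, 0 ≤ t → 0 ≤ u → (Sem t).comp (Sem u) = Sem (t + u))
    (r : ℝ) (x : X) {g s : ℝ} (hg : 0 ≤ g) (hs : 0 ≤ s) :
    ∫ t in (0:ℝ)..s, fnAux Sem r (fnAux Sem r x g) t
      = ∫ t in g..(s + g), fnAux Sem r x t := by
  have h1 : ∫ t in (0:ℝ)..s, fnAux Sem r (fnAux Sem r x g) t
      = ∫ t in (0:ℝ)..s, fnAux Sem r x (t + g) := by
    apply intervalIntegral.integral_congr
    intro t ht
    rw [Set.uIcc_of_le hs] at ht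
    exact fnAux_shift Sem hsem r x hg ht.1
  rw [h1, intervalIntegral.integral_comp_add_right (fun t => fnAux Sem r x t) g, zero_add]

lemma fnAux_apply_integral (Sem : ℝ → (X →L[ℂ] X))
    (hsem : ∀ t u : ℝ, 0 ≤ t → 0 ≤ u → (Sem t).comp (Sem u) = Sem (t + u))
    (hcont : ∀ x : X, ContinuousOn (fun t : ℝ => Sem t x) (Set.Ici (0 : ℝ)))
    (r : ℝ) (x : X) {g s : ℝ} (hg : 0 ≤ g) (hs : 0 ≤ s) :
    fnAux Sem r (∫ t in (0:ℝ)..s, fnAux Sem r x t) g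
      = ∫ t in g..(s + g), fnAux Sem r x t := by
  have hint : IntervalIntegrable (fnAux Sem r x) volume 0 s :=
    fnAux_integrable Sem hcont r x le_rfl hs
  calc fnAux Sem r (∫ t in (0:ℝ)..s, fnAux Sem r x t) g
      = Complex.exp (((2 * Real.pi * r * g : ℝ) : ℂ) * Complex.I) •
        ∫ t in (0:ℝ)..s, Sem g (fnAux Sem r x t) := by
        rw [fnAux, (Sem g).intervalIntegral_comp_comm hint]
    _ = ∫ t in (0:ℝ)..s, fnAux Sem r (fnAux Sem r x t) g := by
        rw [← intervalIntegral.integral_smul]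
        rfl
    _ = ∫ t in (0:ℝ)..s, fnAux Sem r x (g + t) := by
        apply intervalIntegral.integral_congr
        intro t ht
        rw [Set.uIcc_of_le hs] at ht
        exact fnAux_shift Sem hsem r x ht.1 hg
    _ = ∫ t in g..(s + g), fnAux Sem r x t := by
        simp_rw [add_comm g]
        rw [intervalIntegral.integral_comp_add_right (fun t => fnAux Sem r x t) g, zero_add]

lemma fnAux_norm_le (Sem : ℝ → (X →L[ℂ] X)) {C' : ℝ}
    (hb : ∀ t : ℝ, 0 ≤ t → ‖Sem t‖ ≤ C') (r : ℝ) (x : X) {t : ℝ} (ht : 0 ≤ t) :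
    ‖fnAux Sem r x t‖ ≤ C' * ‖x‖ := by
  rw [fnAux_norm]
  exact le_trans ((Sem t).le_opNorm x)
    (mul_le_mul_of_nonneg_right (hb t ht) (norm_nonneg x))

lemma fnAux_diff_bound (Sem : ℝ → (X →L[ℂ] X)) {C' : ℝ}
    (hb : ∀ t : ℝ, 0 ≤ t → ‖Sem t‖ ≤ C')
    (hcont : ∀ x : X, ContinuousOn (fun t : ℝ => Sem t x) (Set.Ici (0 : ℝ)))
    (r : ℝ) (x : X) {g s : ℝ} (hg : 0 ≤ g) (hs : 0 ≤ s) :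
    ‖(∫ t in (0:ℝ)..s, fnAux Sem r x t) - ∫ t in g..(s + g), fnAux Sem r x t‖
      ≤ 2 * (C' * ‖x‖) * g := by
  have hsg : (0:ℝ) ≤ s + g := by linarith
  have i1 := fnAux_integrable Sem hcont r x le_rfl hg
  have i2 := fnAux_integrable Sem hcont r x hg hsg
  have i3 := fnAux_integrable Sem hcont r x le_rfl hs
  have i4 := fnAux_integrable Sem hcont r x hs hsg
  have e1 : (∫ t in (0:ℝ)..s, fnAux Sem r x t) + ∫ t in s..(s+g), fnAux Sem r x t
      = ∫ t in (0:ℝ)..(s+g), fnAux Sem r x t :=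
    intervalIntegral.integral_add_adjacent_intervals i3 i4
  have e2 : (∫ t in (0:ℝ)..g, fnAux Sem r x t) + ∫ t in g..(s+g), fnAux Sem r x t
      = ∫ t in (0:ℝ)..(s+g), fnAux Sem r x t :=
    intervalIntegral.integral_add_adjacent_intervals i1 i2
  have e3 : (∫ t in (0:ℝ)..s, fnAux Sem r x t) - ∫ t in g..(s+g), fnAux Sem r x t
      = (∫ t in (0:ℝ)..g, fnAux Sem r x t) - ∫ t in s..(s+g), fnAux Sem r x t := by
    rw [sub_eq_sub_iff_add_eq_add]
    exact e1.trans e2.symm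
  rw [e3]
  have n1 : ‖∫ t in (0:ℝ)..g, fnAux Sem r x t‖ ≤ C' * ‖x‖ * g := by
    have := intervalIntegral.norm_integral_le_of_norm_le_const
      (f := fnAux Sem r x) (a := 0) (b := g) (C := C' * ‖x‖) ?_
    · simpa [abs_of_nonneg hg] using this
    · intro t ht
      rw [Set.uIoc_of_le hg] at ht
      exact fnAux_norm_le Sem hb r x ht.1.le
  have n2 : ‖∫ t in s..(s+g), fnAux Sem r x t‖ ≤ C' * ‖x‖ * g := by
    have := intervalIntegral.norm_integral_le_of_norm_le_const
      (f := fnAux Sem r x) (a := s) (b := s + g) (C := C' * ‖x‖) ?_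
    · simpa [abs_of_nonneg hg] using this
    · intro t ht
      rw [Set.uIoc_of_le (by linarith : s ≤ s + g)] at ht
      exact fnAux_norm_le Sem hb r x (le_trans hs ht.1.le)
  calc ‖(∫ t in (0:ℝ)..g, fnAux Sem r x t) - ∫ t in s..(s+g), fnAux Sem r x t‖
      ≤ ‖∫ t in (0:ℝ)..g, fnAux Sem r x t‖ + ‖∫ t in s..(s+g), fnAux Sem r x t‖ :=
        norm_sub_le _ _
    _ ≤ C' * ‖x‖ * g + C' * ‖x‖ * g := add_le_add n1 n2
    _ = 2 * (C' * ‖x‖) * g := by ring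

end C0Aux

/-- Proposition 2.2 (d). For a bounded `C₀`-semigroup `(S(t))_{t ≥ 0}`
on `X`, a bounded set `B ⊆ ℝ` and the representations
`𝒮_r = {e^{2πirt} S(t) : t ∈ ℝ₊}` of `(ℝ₊,+)`, `r ∈ B`, the averages
`(1/s) ∫_0^s e^{2πirt} S(t) dt` (with `s → ∞`) form a uniform family of ergodic nets. -/
theorem c0Semigroup_uniformFamilyErgodic
    {X : Type} [NormedAddCommGroup X] [NormedSpace ℂ X] [CompleteSpace X]
    (Sem : ℝ → (X →L[ℂ] X))
    (h0 : Sem 0 = 1)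
    (hsem : ∀ t u : ℝ, 0 ≤ t → 0 ≤ u → (Sem t).comp (Sem u) = Sem (t + u))
    (hbdd : ∃ C : ℝ, ∀ t : ℝ, 0 ≤ t → ‖Sem t‖ ≤ C)
    (hcont : ∀ x : X, ContinuousOn (fun t : ℝ => Sem t x) (Set.Ici (0 : ℝ)))
    (B : Set ℝ) (hB : Bornology.IsBounded B) :
    UniformFamilyErgodic
      (fun (r : B) (t : {t : ℝ // 0 ≤ t}) (x : X) =>
        Complex.exp (((2 * Real.pi * r.1 * t.1 : ℝ) : ℂ) * Complex.I) • Sem t.1 x)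
      (fun (r : B) (s : {s : ℝ // 0 < s}) (x : X) =>
        (s.1)⁻¹ • ∫ t in (0 : ℝ)..s.1,
          Complex.exp (((2 * Real.pi * r.1 * t : ℝ) : ℂ) * Complex.I) • Sem t x) := by
  obtain ⟨C, hC⟩ := hbdd
  set C' := max C 1 with hC'def
  have hC' : ∀ t : ℝ, 0 ≤ t → ‖Sem t‖ ≤ C' := fun t ht => le_trans (hC t ht) (le_max_left _ _)
  have hC'0 : (0:ℝ) < C' := lt_of_lt_of_le one_pos (le_max_right _ _)
  haveI : Nonempty {s : ℝ // 0 < s} := ⟨⟨1, one_pos⟩⟩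
  have hval : Tendsto (fun α : {s : ℝ // 0 < s} => α.1) atTop atTop := by
    rw [tendsto_atTop]
    intro b
    rw [eventually_atTop]
    refine ⟨⟨max b 1, lt_of_lt_of_le one_pos (le_max_right _ _)⟩, fun c hc => ?_⟩
    exact le_trans (le_max_left b 1) (Subtype.coe_le_coe.2 hc)
  have hlim : ∀ M : ℝ, Tendsto (fun α : {s : ℝ // 0 < s} => M * (α.1)⁻¹) atTop (𝓝 0) :=
    fun M => by simpa using (tendsto_inv_atTop_zero.comp hval).const_mul M
  have hbound2 : ∀ (g : {t : ℝ // 0 ≤ t}) (x : X) (r : ℝ) (α : {s : ℝ // 0 < s}),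
      ‖(α.1)⁻¹ • (∫ t in (0:ℝ)..α.1, C0Aux.fnAux Sem r x t)
        - (α.1)⁻¹ • (∫ t in g.1..(α.1 + g.1), C0Aux.fnAux Sem r x t)‖
        ≤ (2 * (C' * ‖x‖) * g.1) * (α.1)⁻¹ := by
    intro g x r α
    rw [← smul_sub, norm_smul, Real.norm_eq_abs, abs_of_nonneg (inv_nonneg.2 α.2.le), mul_comm]
    exact mul_le_mul_of_nonneg_right
      (C0Aux.fnAux_diff_bound Sem hC' hcont r x g.2 α.2.le) (inv_nonneg.2 α.2.le)
  refine ⟨⟨?_, ?_⟩, ?_⟩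
  · -- part (1): Riemann sum approximation
    intro α ε hε m xs
    have hs0 : 0 < α.1 := α.2
    set s := α.1 with hsdef
    obtain ⟨M, hM⟩ := isBounded_iff_forall_norm_le.1 hB
    set M' := max M 0 with hM'def
    have hM' : ∀ r ∈ B, r ∈ Set.Icc (-M') M' := by
      intro r hr
      have : |r| ≤ M' := le_trans (Real.norm_eq_abs r ▸ hM r hr) (le_max_left _ _)
      exact Set.mem_Icc.2 (abs_le.1 this)
    set K := Set.Icc (-M') M' ×ˢ Set.Icc (0:ℝ) s with hKdef
    have hKc : IsCompact K := isCompact_Icc.prod isCompact_Icc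
    set G : ℝ × ℝ → (Fin m → X) := fun p k => C0Aux.fnAux Sem p.1 (xs k) p.2 with hG
    have hGc : ContinuousOn G K := by
      apply continuousOn_pi.2
      intro k
      simp only [hG, C0Aux.fnAux]
      apply ContinuousOn.smul
      · apply Continuous.continuousOn
        fun_prop
      · exact (hcont (xs k)).comp continuous_snd.continuousOn (fun p hp => hp.2.1)
    have hUC := hKc.uniformContinuousOn_of_continuous hGc
    rw [Metric.uniformContinuousOn_iff] at hUC
    obtain ⟨δ, hδ0, hδ⟩ := hUC (ε/2) (half_pos hε)
    obtain ⟨N, hNgt⟩ := exists_nat_gt (max (s/δ) 0)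
    have hN0 : (0:ℝ) < N := lt_of_le_of_lt (le_max_right _ _) hNgt
    have hN0' : (N:ℝ) ≠ 0 := hN0.ne'
    have hsN : s / N < δ := by
      rw [div_lt_iff₀ hN0, mul_comm]
      exact (div_lt_iff₀ hδ0).1 (lt_of_le_of_lt (le_max_left _ _) hNgt)
    set a : ℕ → ℝ := fun j => j * (s/N) with ha
    have ha0 : a 0 = 0 := by simp [ha]
    have haN : a N = s := by simp only [ha]; field_simp
    have hstep : ∀ j : ℕ, a (j+1) - a j = s / N := by
      intro j
      simp only [ha]
      push_cast
      ring
    have hsN0 : 0 ≤ s / N := by positivity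
    have hamem : ∀ j : ℕ, j ≤ N → a j ∈ Set.Icc (0:ℝ) s := by
      intro j hj
      constructor
      · positivity
      · have h1 : (j:ℝ) * (s/N) ≤ (N:ℝ) * (s/N) :=
          mul_le_mul_of_nonneg_right (by exact_mod_cast hj) hsN0
        calc a j ≤ (N:ℝ) * (s/N) := h1
          _ = s := by field_simp
    refine ⟨N, fun j => ⟨a j.1, (hamem j.1 j.2.le).1⟩, fun _ _ => (N:ℝ)⁻¹,
      fun _ _ => by positivity, fun i => ?_, ?_⟩
    · rw [Finset.sum_const, Finset.card_univ, Fintype.card_fin, nsmul_eq_mul,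
        mul_inv_cancel₀ hN0']
    intro r k
    simp only [C0Aux.fnAux_def]
    set F := C0Aux.fnAux Sem r.1 (xs k) with hF
    have hFi : ∀ j : ℕ, j < N → IntervalIntegrable F volume (a j) (a (j+1)) := fun j hj =>
      C0Aux.fnAux_integrable Sem hcont _ _ (hamem j hj.le).1 (hamem (j+1) hj).1
    have hsplit : (∫ t in (0:ℝ)..s, F t) = ∑ j ∈ Finset.range N, ∫ t in a j..a (j+1), F t := by
      rw [intervalIntegral.sum_integral_adjacent_intervals hFi, ha0, haN]
    have hconst : ∀ j : ℕ, (N:ℝ)⁻¹ • F (a j) = s⁻¹ • ∫ t in a j..a (j+1), F (a j) := by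
      intro j
      rw [intervalIntegral.integral_const, hstep j, smul_smul]
      congr 1
      field_simp
    have key : s⁻¹ • (∫ t in (0:ℝ)..s, F t) - ∑ j : Fin N, (N:ℝ)⁻¹ • F (a j.1)
        = s⁻¹ • ∑ j ∈ Finset.range N, ∫ t in a j..a (j+1), (F t - F (a j)) := by
      rw [Fin.sum_univ_eq_sum_range (fun j => (N:ℝ)⁻¹ • F (a j)) N, hsplit]
      rw [Finset.sum_congr rfl (fun j hj => hconst j), ← Finset.smul_sum, ← smul_sub,
        ← Finset.sum_sub_distrib]
      congr 1
      refine Finset.sum_congr rfl (fun j hj => ?_)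
      rw [intervalIntegral.integral_sub (hFi j (Finset.mem_range.1 hj)) intervalIntegrable_const]
    have hub : ∀ j ∈ Finset.range N, ‖∫ t in a j..a (j+1), (F t - F (a j))‖ ≤ ε/2 * (s/N) := by
      intro j hj
      have hjN : j < N := Finset.mem_range.1 hj
      have hle : a j ≤ a (j+1) := by linarith [hstep j, hsN0]
      have hbd : ∀ t ∈ Set.uIoc (a j) (a (j+1)), ‖F t - F (a j)‖ ≤ ε/2 := by
        intro t ht
        rw [Set.uIoc_of_le hle] at ht
        have ht1 : 0 ≤ t := le_trans (hamem j hjN.le).1 ht.1.le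
        have ht2 : t ≤ s := le_trans ht.2 (hamem (j+1) hjN).2
        have hp : ((r.1 : ℝ), t) ∈ K := ⟨hM' r.1 r.2, Set.mem_Icc.2 ⟨ht1, ht2⟩⟩
        have hq : ((r.1 : ℝ), a j) ∈ K := ⟨hM' r.1 r.2, hamem j hjN.le⟩
        have hd : dist ((r.1 : ℝ), t) ((r.1 : ℝ), a j) < δ := by
          rw [Prod.dist_eq]
          have h1 : dist t (a j) < δ := by
            rw [Real.dist_eq, abs_of_nonneg (sub_nonneg.2 ht.1.le)]
            calc t - a j ≤ a (j+1) - a j := by linarith [ht.2]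
              _ = s / N := hstep j
              _ < δ := hsN
          simpa [dist_self, max_eq_right dist_nonneg] using h1
        have hdist := hδ _ hp _ hq hd
        have h2 := le_trans (dist_le_pi_dist (G ((r.1:ℝ), t)) (G ((r.1:ℝ), a j)) k) hdist.le
        have h3 : dist (F t) (F (a j)) ≤ ε/2 := h2
        rw [dist_eq_norm] at h3
        exact h3
      have := intervalIntegral.norm_integral_le_of_norm_le_const hbd
      calc ‖∫ t in a j..a (j+1), (F t - F (a j))‖ ≤ ε/2 * |a (j+1) - a j| := this
        _ = ε/2 * (s/N) := by rw [hstep j, abs_of_nonneg hsN0]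
    calc ‖s⁻¹ • (∫ t in (0:ℝ)..s, F t) - ∑ j : Fin N, (N:ℝ)⁻¹ • F (a j.1)‖
        = s⁻¹ * ‖∑ j ∈ Finset.range N, ∫ t in a j..a (j+1), (F t - F (a j))‖ := by
          rw [key, norm_smul, Real.norm_eq_abs, abs_of_nonneg (inv_nonneg.2 hs0.le)]
      _ ≤ s⁻¹ * ∑ j ∈ Finset.range N, ‖∫ t in a j..a (j+1), (F t - F (a j))‖ := by
          apply mul_le_mul_of_nonneg_left (norm_sum_le _ _) (inv_nonneg.2 hs0.le)
      _ ≤ s⁻¹ * ∑ j ∈ Finset.range N, (ε/2 * (s/N)) := by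
          apply mul_le_mul_of_nonneg_left (Finset.sum_le_sum hub) (inv_nonneg.2 hs0.le)
      _ = ε/2 := by
          rw [Finset.sum_const, Finset.card_range, nsmul_eq_mul]
          field_simp
      _ < ε := by linarith
  · -- part (2)
    intro g x
    apply squeeze_zero' (Eventually.of_forall fun α => Real.iSup_nonneg fun r => norm_nonneg _)
      (Eventually.of_forall ?_) (hlim (2 * (C' * ‖x‖) * g.1))
    intro α
    apply Real.iSup_le _ (by have hg := g.2; have ha := α.2; positivity)
    intro r
    simp only [C0Aux.fnAux_def]
    rw [C0Aux.fnAux_integral_shift Sem hsem r.1 x g.2 α.2.le]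
    exact hbound2 g x r.1 α
  · -- part (3)
    intro g x
    apply squeeze_zero' (Eventually.of_forall fun α => Real.iSup_nonneg fun r => norm_nonneg _)
      (Eventually.of_forall ?_) (hlim (2 * (C' * ‖x‖) * g.1))
    intro α
    apply Real.iSup_le _ (by have hg := g.2; have ha := α.2; positivity)
    intro r
    simp only [C0Aux.fnAux_def]
    rw [C0Aux.fnAux_real_smul, C0Aux.fnAux_apply_integral Sem hsem hcont r.1 x g.2 α.2.le]
    exact hbound2 g x r.1 α
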